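/- Let w be a weight vector with nonzero entries and l a continuous nonnegative loss. Fix a hidden layer s with nodes O_{1,s},...,O_{h,s}, and let w_{i,s} be the incoming weight vector of node O_{i,s}. Setting c_{i,s} = ε/(√h · ‖w_{i,s}‖) for each i and applying the positively scaling transformation φ_c with these factors (and 1 elsewhere) yields w' = φ_c(w) such that the point obtained from w' by zeroing all incoming weights of layer s lies in the Euclidean ball B(w', ε). Consequently max_{w'' ∈ B(w',ε)} l(w'') ≥ l(w_zero), where w_zero is w' with layer-s incoming weights zeroed (a network computing a constant function). -/

import Mathlib

/-! The rescaling makes every incoming block of layer `s` have norm `ε / √h`, so the `h` blocks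
together have norm exactly `ε`: the origin (all of them zeroed) lies on the sphere of radius `ε`
about the rescaled weights. A continuous function on the compact ball is bounded above, so its
supremum there dominates its value at the origin. -/

open Metric

theorem EuclideanSpace.norm_sq_of_blockwise_smul {ι κ : Type*} [Fintype ι] [Fintype κ]
    (x : EuclideanSpace ℝ (ι × κ)) (c : ι → ℝ) (w : ι → EuclideanSpace ℝ κ)
    (hx : ∀ i j, x (i, j) = c i * w i j) :
    ‖x‖ ^ 2 = ∑ i, (c i * ‖w i‖) ^ 2 := by
  rw [EuclideanSpace.real_norm_sq_eq, Fintype.sum_prod_type]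
  refine Finset.sum_congr rfl fun i _ => ?_
  simp only [hx, mul_pow, ← Finset.mul_sum, ← EuclideanSpace.real_norm_sq_eq]

theorem mul_norm_eq_of_eq_div_mul_norm {E : Type*} [NormedAddCommGroup E] {v : E} (hv : v ≠ 0)
    {a b c : ℝ} (hc : c = a / (b * ‖v‖)) : c * ‖v‖ = a / b := by
  rw [hc, div_mul_eq_div_div, div_mul_cancel₀ _ (norm_ne_zero_iff.mpr hv)]

theorem Continuous.le_iSup_closedBall {E : Type*} [PseudoMetricSpace E] [ProperSpace E]
    {f : E → ℝ} (hf : Continuous f) {x y : E} {r : ℝ} (hy : y ∈ closedBall x r) :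
    f y ≤ ⨆ z : closedBall x r, f z := by
  have : CompactSpace (closedBall x r) := isCompact_iff_compactSpace.mp (isCompact_closedBall x r)
  exact le_ciSup (isCompact_range (hf.comp continuous_subtype_val)).bddAbove ⟨y, hy⟩

theorem eps_flatness_not_psi_construction_general (h k : ℕ) (hh : 0 < h)
    (ε : ℝ) (hε : 0 < ε)
    (w : Fin h → EuclideanSpace ℝ (Fin k)) (hw : ∀ i, w i ≠ 0)
    (c : Fin h → ℝ) (hc : ∀ i, c i = ε / (Real.sqrt h * ‖w i‖))
    (w' : EuclideanSpace ℝ (Fin h × Fin k))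
    (hw' : ∀ i j, w' (i, j) = c i * w i j)
    (l : EuclideanSpace ℝ (Fin h × Fin k) → ℝ)
    (hl : Continuous l) :
    (0 : EuclideanSpace ℝ (Fin h × Fin k)) ∈ Metric.closedBall w' ε ∧
    l 0 ≤ ⨆ x : Metric.closedBall w' ε, l ↑x := by
  have hblock : ∀ i, c i * ‖w i‖ = ε / √h := fun i => mul_norm_eq_of_eq_div_mul_norm (hw i) (hc i)
  have hnorm : ‖w'‖ = ε := by
    have hh' : (h : ℝ) ≠ 0 := Nat.cast_ne_zero.mpr hh.ne'
    refine (pow_left_inj₀ (norm_nonneg _) hε.le two_ne_zero).mp ?_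
    simp_rw [EuclideanSpace.norm_sq_of_blockwise_smul w' c w hw', hblock, Finset.sum_const,
      Finset.card_univ, Fintype.card_fin, nsmul_eq_mul, div_pow, Real.sq_sqrt h.cast_nonneg,
      mul_div_cancel₀ _ hh']
  have hmem : (0 : EuclideanSpace ℝ (Fin h × Fin k)) ∈ closedBall w' ε := by
    rw [mem_closedBall, dist_zero_left, hnorm]
  exact ⟨hmem, hl.le_iSup_closedBall hmem⟩

/-- After positively rescaling the incoming weight blocks of layer s by
c_i = ε/(√h‖w_i‖), the point with those blocks zeroed lies in the ε-ball
around the rescaled weights; hence the max of the loss on that ball is at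
least the loss at the zeroed (constant-function) point. -/
theorem eps_flatness_not_psi_construction (h k : ℕ) (hh : 0 < h)
    (ε : ℝ) (hε : 0 < ε)
    (w : Fin h → EuclideanSpace ℝ (Fin k)) (hw : ∀ i, w i ≠ 0)
    (c : Fin h → ℝ) (hc : ∀ i, c i = ε / (Real.sqrt h * ‖w i‖))
    (w' : EuclideanSpace ℝ (Fin h × Fin k))
    (hw' : ∀ i j, w' (i, j) = c i * w i j)
    (l : EuclideanSpace ℝ (Fin h × Fin k) → ℝ)
    (hl : Continuous l) (hl0 : ∀ x, 0 ≤ l x) :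
    (0 : EuclideanSpace ℝ (Fin h × Fin k)) ∈ Metric.closedBall w' ε ∧
    l 0 ≤ ⨆ x : Metric.closedBall w' ε, l ↑x :=
  eps_flatness_not_psi_construction_general h k hh ε hε w hw c hc w' hw' l hl
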